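/- If s, t ≥ 1 satisfy 8(s+t) ≤ st, then the 3-uniform hypergraph K⁺_{s,t} is eligible with Δ(K⁺_{s,t}) = s + t and e(K⁺_{s,t}) = st. -/

import Mathlib

/-- A 3-uniform hypergraph on vertex type `V`: a finite set of edges, each of size 3. -/
structure Hypergraph3 (V : Type*) where
  edges : Finset (Finset V)
  card3 : ∀ e ∈ edges, e.card = 3

variable {V : Type*} [DecidableEq V]

/-- The edges of `F` contained in the vertex set `U`. -/
def edgesIn (F : Hypergraph3 V) (U : Finset V) : Finset (Finset V) :=
  F.edges.filter (fun e => e ⊆ U)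

/-- The deficiency `Δ(U) = |U| - e(F[U])`. -/
def defic (F : Hypergraph3 V) (U : Finset V) : ℤ :=
  (U.card : ℤ) - ((edgesIn F U).card : ℤ)

/-- `A` is independent in `F` if no edge of `F` is contained in `A`. -/
def Indep (F : Hypergraph3 V) (A : Finset V) : Prop :=
  ∀ e ∈ F.edges, ¬ e ⊆ A

/-- `A` is good: independent, and every strict superset `U` has `Δ(U) ≥ |A| + 1`. -/
def Good (F : Hypergraph3 V) (A : Finset V) : Prop :=
  Indep F A ∧ ∀ U : Finset V, A ⊂ U → (A.card : ℤ) + 1 ≤ defic F U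

variable [Fintype V]

/-- The degree of a vertex: the number of edges containing it. -/
def deg (F : Hypergraph3 V) (x : V) : ℕ :=
  (F.edges.filter (fun e => x ∈ e)).card

/-- `F` is eligible with data `A, B, u, v` and deficiency `k`:
(i) `A, B` are disjoint good sets of size `k - 1`;
(ii) `u ≠ v` are vertices outside `A ∪ B`;
(iii) at most `e(F)/4 - k` vertices have degree `> 1`, every edge contains at most one
vertex of degree `1`, and there are no isolated vertices;
(iv) every `U` with `|U| ≥ 2` has `Δ(U) ≥ 2`. -/
def EligibleWith (F : Hypergraph3 V) (A B : Finset V) (u v : V) (k : ℕ) : Prop :=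
  1 ≤ k ∧ defic F Finset.univ = (k : ℤ) ∧
  Good F A ∧ Good F B ∧ Disjoint A B ∧ A.card = k - 1 ∧ B.card = k - 1 ∧
  u ≠ v ∧ u ∉ A ∪ B ∧ v ∉ A ∪ B ∧
  (((Finset.univ.filter (fun x => 1 < deg F x)).card : ℚ) ≤ (F.edges.card : ℚ) / 4 - k) ∧
  (∀ e ∈ F.edges, (e.filter (fun x => deg F x = 1)).card ≤ 1) ∧
  (∀ x : V, 1 ≤ deg F x) ∧
  (∀ U : Finset V, 2 ≤ U.card → 2 ≤ defic F U)

/-- `F` is eligible. -/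
def Eligible (F : Hypergraph3 V) : Prop :=
  ∃ A B u v k, EligibleWith F A B u v k

/-- The vertex type of `K⁺_{s,t}`: left part, right part, and one vertex per edge. -/
abbrev KV (s t : ℕ) := Fin s ⊕ Fin t ⊕ Fin s × Fin t

/-- The 3-edge of `K⁺_{s,t}` corresponding to the pair `p`. -/
def KplusEdge (s t : ℕ) (p : Fin s × Fin t) : Finset (KV s t) :=
  {Sum.inl p.1, Sum.inr (Sum.inl p.2), Sum.inr (Sum.inr p)}

/-- `K⁺_{s,t}`: the 3-uniform hypergraph obtained from `K_{s,t}` by adding a distinct new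
vertex to each edge. -/
def Kplus (s t : ℕ) : Hypergraph3 (KV s t) where
  edges := Finset.univ.image (KplusEdge s t)
  card3 := by
    intro e he
    simp only [Finset.mem_image] at he
    obtain ⟨p, -, rfl⟩ := he
    rw [KplusEdge, Finset.card_insert_of_notMem (by simp),
      Finset.card_insert_of_notMem (by simp), Finset.card_singleton]

/-! Take two edge-disjoint spanning trees of `K_{s,t}` (two shifted double stars, which exist once
`s, t ≥ 4`) and let `A`, `B` be the sets of added vertices on their edges. If `U ⊋ A`, an edge of
`K⁺_{s,t}` inside `U` either comes from the tree, and a forest on the `n ≥ 1` original vertices of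
`U` has fewer than `n` edges, or it does not, and then its added vertex is a vertex of `U \ A`
that no other edge uses. Hence `Δ(U) ≥ |A| + 1`. The original vertices have degrees `t` and `s`
and the added ones degree `1`, so condition (iii) reads `s + t ≤ st/4 - (s + t)`, which is
`8(s + t) ≤ st`. -/

open Finset

namespace Kplus

variable {s t : ℕ}

def baseV : Fin s ⊕ Fin t → KV s t := Sum.elim Sum.inl (Sum.inr ∘ Sum.inl)

def midV (p : Fin s × Fin t) : KV s t := Sum.inr (Sum.inr p)

def ends (p : Fin s × Fin t) : Finset (Fin s ⊕ Fin t) := {Sum.inl p.1, Sum.inr p.2}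

@[elab_as_elim]
lemma vertex_cases {motive : KV s t → Prop} (inl : ∀ a, motive (baseV (.inl a)))
    (inr : ∀ b, motive (baseV (.inr b))) (mid : ∀ p, motive (midV p)) (x : KV s t) : motive x := by
  rcases x with a | b | p
  exacts [inl a, inr b, mid p]

lemma baseV_injective : Function.Injective (baseV (s := s) (t := t)) := by
  rintro (a | b) (a' | b') h <;> simp_all [baseV]

lemma midV_injective : Function.Injective (midV (s := s) (t := t)) := by
  intro p q h
  simpa [midV] using h

@[simp] lemma midV_inj {p q : Fin s × Fin t} : midV p = midV q ↔ p = q := midV_injective.eq_iff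

@[simp] lemma baseV_ne_midV (w : Fin s ⊕ Fin t) (p : Fin s × Fin t) : baseV w ≠ midV p := by
  rcases w with a | b <;> simp [baseV, midV]

@[simp] lemma midV_ne_baseV (p : Fin s × Fin t) (w : Fin s ⊕ Fin t) : midV p ≠ baseV w :=
  (baseV_ne_midV w p).symm

lemma exists_mem_ends_ne (p : Fin s × Fin t) (v : Fin s ⊕ Fin t) : ∃ w ∈ ends p, w ≠ v := by
  by_cases h : v = Sum.inl p.1
  · exact ⟨Sum.inr p.2, by simp [ends], by simp [h]⟩
  · exact ⟨Sum.inl p.1, by simp [ends], Ne.symm h⟩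

@[simp] lemma baseV_mem_KplusEdge (w : Fin s ⊕ Fin t) (p : Fin s × Fin t) :
    baseV w ∈ KplusEdge s t p ↔ w ∈ ends p := by
  rcases w with a | b <;> simp [baseV, KplusEdge, ends, eq_comm]

@[simp] lemma midV_mem_KplusEdge (q p : Fin s × Fin t) : midV q ∈ KplusEdge s t p ↔ q = p := by
  simp [midV, KplusEdge]

lemma KplusEdge_injective : Function.Injective (KplusEdge s t) := by
  intro p q h
  simpa using (h ▸ (midV_mem_KplusEdge p p).mpr rfl : midV p ∈ KplusEdge s t q)

lemma card_edges : #(Kplus s t).edges = s * t := by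
  rw [Kplus, card_image_of_injective _ KplusEdge_injective, card_univ, Fintype.card_prod,
    Fintype.card_fin, Fintype.card_fin]

def baseIn (U : Finset (KV s t)) : Finset (Fin s ⊕ Fin t) := univ.filter (baseV · ∈ U)

def midIn (U : Finset (KV s t)) : Finset (Fin s × Fin t) := univ.filter (midV · ∈ U)

@[simp] lemma mem_baseIn {U : Finset (KV s t)} {w : Fin s ⊕ Fin t} :
    w ∈ baseIn U ↔ baseV w ∈ U := by
  simp [baseIn]

@[simp] lemma mem_midIn {U : Finset (KV s t)} {p : Fin s × Fin t} : p ∈ midIn U ↔ midV p ∈ U := by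
  simp [midIn]

lemma card_baseIn_add_card_midIn (U : Finset (KV s t)) : #(baseIn U) + #(midIn U) = #U := by
  calc #(baseIn U) + #(midIn U) = #(univ.filter (· ∈ U)) := by
        rw [baseIn, midIn, card_filter, card_filter, card_filter, Fintype.sum_sum_type,
          Fintype.sum_sum_type, Fintype.sum_sum_type, add_assoc]
        rfl
    _ = #U := by rw [filter_mem_eq_inter, univ_inter]

lemma KplusEdge_subset_iff (p : Fin s × Fin t) (U : Finset (KV s t)) :
    KplusEdge s t p ⊆ U ↔ ends p ⊆ baseIn U ∧ p ∈ midIn U := by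
  simp [KplusEdge, ends, insert_subset_iff, baseV, midV, and_assoc]

lemma card_edgesIn (U : Finset (KV s t)) :
    #(edgesIn (Kplus s t) U) = #((midIn U).filter (ends · ⊆ baseIn U)) := by
  have : (midIn U).filter (ends · ⊆ baseIn U) = univ.filter (KplusEdge s t · ⊆ U) := by
    ext p
    simp [KplusEdge_subset_iff, and_comm]
  rw [this, edgesIn, Kplus, filter_image, card_image_of_injective _ KplusEdge_injective]

lemma defic_eq (U : Finset (KV s t)) :
    defic (Kplus s t) U = #(baseIn U) + #(midIn U) - #((midIn U).filter (ends · ⊆ baseIn U)) := by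
  rw [defic, card_edgesIn, ← card_baseIn_add_card_midIn]
  push_cast
  ring

lemma defic_univ : defic (Kplus s t) univ = s + t := by
  have hbase : baseIn (univ : Finset (KV s t)) = univ := by ext; simp
  have hmid : midIn (univ : Finset (KV s t)) = univ := by ext; simp
  rw [defic_eq, hbase, hmid, filter_true_of_mem fun p _ => subset_univ _]
  simp

lemma two_le_defic {U : Finset (KV s t)} (hU : 2 ≤ #U) : 2 ≤ defic (Kplus s t) U := by
  rw [defic_eq]
  rcases ((midIn U).filter (ends · ⊆ baseIn U)).eq_empty_or_nonempty with hP | ⟨p, hp⟩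
  · rw [← card_baseIn_add_card_midIn] at hU
    rw [hP, card_empty]
    omega
  · have hN : 2 ≤ #(baseIn U) := (card_le_card (mem_filter.mp hp).2).trans' (by simp [ends])
    have := card_filter_le (midIn U) (ends · ⊆ baseIn U)
    omega

lemma deg_eq (x : KV s t) : deg (Kplus s t) x = #(univ.filter (x ∈ KplusEdge s t ·)) := by
  rw [deg, Kplus, filter_image, card_image_of_injective _ KplusEdge_injective]

@[simp] lemma deg_baseV_inl (a : Fin s) : deg (Kplus s t) (baseV (.inl a)) = t := by
  rw [deg_eq, show univ.filter (baseV (.inl a) ∈ KplusEdge s t ·) = {a} ×ˢ univ by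
    ext ⟨x, y⟩; simp [ends, eq_comm]]
  simp

@[simp] lemma deg_baseV_inr (b : Fin t) : deg (Kplus s t) (baseV (.inr b)) = s := by
  rw [deg_eq, show univ.filter (baseV (.inr b) ∈ KplusEdge s t ·) = univ ×ˢ {b} by
    ext ⟨x, y⟩; simp [ends, eq_comm]]
  simp

@[simp] lemma deg_midV (q : Fin s × Fin t) : deg (Kplus s t) (midV q) = 1 := by
  simp [deg_eq, filter_eq]

lemma one_le_deg (hs : 1 ≤ s) (ht : 1 ≤ t) (x : KV s t) : 1 ≤ deg (Kplus s t) x := by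
  induction x using vertex_cases <;> simp [hs, ht]

lemma card_filter_one_lt_deg (hs : 2 ≤ s) (ht : 2 ≤ t) :
    #(univ.filter (1 < deg (Kplus s t) ·)) = s + t := by
  have hbase : baseIn (univ.filter (1 < deg (Kplus s t) ·)) = univ := by
    ext (a | b) <;> simp <;> omega
  have hmid : midIn (univ.filter (1 < deg (Kplus s t) ·)) = ∅ := by
    ext p; simp
  rw [← card_baseIn_add_card_midIn, hbase, hmid]
  simp

lemma filter_deg_eq_one_KplusEdge (hs : 2 ≤ s) (ht : 2 ≤ t) (p : Fin s × Fin t) :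
    (KplusEdge s t p).filter (deg (Kplus s t) · = 1) = {midV p} := by
  ext x
  induction x using vertex_cases <;> simp [ends] <;> omega

/-- A spanning tree of `K_{s,t}`, rooted at `root`: every other vertex `v` is joined to its parent
by the edge `up v`, and the parent is strictly shallower. -/
structure SpanningTree (s t : ℕ) where
  root : Fin s ⊕ Fin t
  up : Fin s ⊕ Fin t → Fin s × Fin t
  depth : Fin s ⊕ Fin t → ℕ
  mem_ends_up : ∀ v ≠ root, v ∈ ends (up v)
  depth_lt : ∀ v ≠ root, ∀ w ∈ ends (up v), w ≠ v → depth w < depth v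

namespace SpanningTree

variable (T : SpanningTree s t)

def edges : Finset (Fin s × Fin t) := (univ.erase T.root).image T.up

lemma up_injOn : Set.InjOn T.up (univ.erase T.root : Finset _) := by
  intro v hv w hw hvw
  by_contra hne
  simp only [mem_coe, mem_erase, mem_univ, and_true] at hv hw
  have hwv := T.depth_lt v hv w (hvw ▸ T.mem_ends_up w hw) (Ne.symm hne)
  have hvw := T.depth_lt w hw v (hvw ▸ T.mem_ends_up v hv) hne
  omega

lemma card_edges : #T.edges = s + t - 1 := by
  rw [edges, card_image_of_injOn T.up_injOn, card_erase_of_mem (mem_univ _), card_univ,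
    Fintype.card_sum, Fintype.card_fin, Fintype.card_fin]

/-- A vertex of minimal depth in `N` is not the lower end of an edge inside `N`. -/
lemma card_filter_ends_subset_lt {N : Finset (Fin s ⊕ Fin t)} (hN : N.Nonempty) :
    #(T.edges.filter (ends · ⊆ N)) < #N := by
  obtain ⟨x, hxN, hx⟩ := N.exists_min_image T.depth hN
  have hsub : T.edges.filter (ends · ⊆ N) ⊆ (N.erase x).image T.up := by
    intro p hp
    obtain ⟨hp, hends⟩ := mem_filter.mp hp
    obtain ⟨v, hv, rfl⟩ := mem_image.mp hp
    have hv : v ≠ T.root := ne_of_mem_erase hv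
    obtain ⟨w, hw, hwv⟩ := exists_mem_ends_ne (T.up v) v
    refine mem_image.mpr ⟨v, mem_erase.mpr ⟨?_, hends (T.mem_ends_up v hv)⟩, rfl⟩
    rintro rfl
    exact (hx w (hends hw)).not_gt (T.depth_lt _ hv w hw hwv)
  calc #(T.edges.filter (ends · ⊆ N)) ≤ #((N.erase x).image T.up) := card_le_card hsub
    _ ≤ #(N.erase x) := card_image_le
    _ < #N := card_erase_lt_of_mem hxN

theorem good : Good (Kplus s t) (T.edges.image midV) := by
  refine ⟨fun e he hsub => ?_, fun U hU => ?_⟩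
  · obtain ⟨p, -, rfl⟩ := mem_image.mp he
    simpa using hsub ((baseV_mem_KplusEdge (.inl p.1) p).mpr (by simp [ends]))
  have hTM : T.edges ⊆ midIn U := fun p hp => mem_midIn.mpr (hU.subset (mem_image_of_mem _ hp))
  have hU_card := card_baseIn_add_card_midIn U
  have hA_lt := card_lt_card hU
  rw [card_image_of_injective _ midV_injective] at hA_lt ⊢
  rw [defic_eq]
  rcases (baseIn U).eq_empty_or_nonempty with hN | hN
  · have hP : (midIn U).filter (ends · ⊆ baseIn U) = ∅ :=
      filter_eq_empty_iff.mpr fun p _ h => by simp [hN, ends] at h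
    rw [hN, card_empty] at hU_card
    rw [hP, hN, card_empty, card_empty]
    omega
  · have hforest := T.card_filter_ends_subset_lt hN
    have hsplit : #((midIn U).filter (ends · ⊆ baseIn U))
        ≤ #(T.edges.filter (ends · ⊆ baseIn U)) + #(midIn U \ T.edges) := by
      refine (card_le_card fun p hp => ?_).trans (card_union_le _ _)
      by_cases p ∈ T.edges <;> simp_all
    have := card_sdiff_add_card_eq_card hTM
    omega

end SpanningTree

/-- Root `i` on the left joined to every right vertex but `i + 1`, right vertex `i` joined to
every left vertex but `i + 1`, and the two edges `(i + 1, i + 2)`, `(i + 2, i + 1)`. -/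
def doubleStar (i : ℕ) (hs : i + 3 ≤ s) (ht : i + 3 ≤ t) : SpanningTree s t where
  root := .inl ⟨i, by omega⟩
  up := Sum.elim (fun a => (a, if a.val = i + 1 then ⟨i + 2, by omega⟩ else ⟨i, by omega⟩))
    (fun b => (if b.val = i + 1 then ⟨i + 2, by omega⟩ else ⟨i, by omega⟩, b))
  depth := Sum.elim (fun a => if a.val = i then 0 else 2) (fun b => if b.val = i + 1 then 3 else 1)
  mem_ends_up := by rintro (a | b) - <;> simp [ends]
  depth_lt := by
    rintro (a | b) hv w hw hwv <;> simp only [ends, mem_insert, mem_singleton] at hw <;>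
      rcases hw with rfl | rfl <;> simp [Fin.ext_iff, apply_ite Fin.val] at hv hwv ⊢ <;> grind

lemma disjoint_edges_doubleStar (hs : 4 ≤ s) (ht : 4 ≤ t) :
    Disjoint (doubleStar 0 (by omega) (by omega) : SpanningTree s t).edges
      (doubleStar 1 hs ht).edges := by
  rw [disjoint_left]
  intro p hp₀ hp₁
  obtain ⟨v, hv, rfl⟩ := mem_image.mp hp₀
  obtain ⟨w, hw, hvw⟩ := mem_image.mp hp₁
  rcases v with a | b <;> rcases w with a' | b' <;>
    simp [doubleStar, Prod.ext_iff, Fin.ext_iff, apply_ite Fin.val] at hv hw hvw <;> grind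

theorem eligibleWith_of_disjoint_edges (T₁ T₂ : SpanningTree s t) (hT : Disjoint T₁.edges T₂.edges)
    {u v : Fin s ⊕ Fin t} (huv : u ≠ v) (hs : 2 ≤ s) (ht : 2 ≤ t) (h : 8 * (s + t) ≤ s * t) :
    EligibleWith (Kplus s t) (T₁.edges.image midV) (T₂.edges.image midV) (baseV u) (baseV v)
      (s + t) := by
  have hcard (T : SpanningTree s t) : #(T.edges.image midV) = s + t - 1 := by
    rw [card_image_of_injective _ midV_injective, T.card_edges]
  refine ⟨by omega, by rw [defic_univ]; push_cast; rfl, T₁.good, T₂.good,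
    (disjoint_image midV_injective).mpr hT, hcard T₁, hcard T₂, baseV_injective.ne huv,
    by simp, by simp, ?_, fun e he => ?_, one_le_deg (by omega) (by omega),
    fun U => two_le_defic⟩
  · rw [card_filter_one_lt_deg hs ht, card_edges]
    have : ((8 * (s + t) : ℕ) : ℚ) ≤ (s * t : ℕ) := by exact_mod_cast h
    push_cast at this ⊢
    linarith
  · obtain ⟨p, -, rfl⟩ := mem_image.mp he
    rw [filter_deg_eq_one_KplusEdge hs ht, card_singleton]

end Kplus

theorem Kplus_eligible_general (s t : ℕ) (hs : 1 ≤ s) (h : 8 * (s + t) ≤ s * t) :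
    Eligible (Kplus s t) ∧ defic (Kplus s t) Finset.univ = (s : ℤ) + t ∧
    (Kplus s t).edges.card = s * t := by
  have hs₄ : 4 ≤ s := by nlinarith
  have ht₄ : 4 ≤ t := by nlinarith
  have hT := Kplus.disjoint_edges_doubleStar hs₄ ht₄
  have := Kplus.eligibleWith_of_disjoint_edges _ _ hT
    (Sum.inl_ne_inr (a := ⟨0, by omega⟩) (b := ⟨0, by omega⟩)) (by omega) (by omega) h
  exact ⟨⟨_, _, _, _, _, this⟩, Kplus.defic_univ, Kplus.card_edges⟩

/-- if `8(s+t) ≤ st` (with `s, t ≥ 1`), then `K⁺_{s,t}` is eligible, with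
deficiency `s + t` and `st` edges. -/
theorem Kplus_eligible (s t : ℕ) (hs : 1 ≤ s) (ht : 1 ≤ t) (h : 8 * (s + t) ≤ s * t) :
    Eligible (Kplus s t) ∧ defic (Kplus s t) Finset.univ = (s : ℤ) + t ∧
    (Kplus s t).edges.card = s * t :=
  Kplus_eligible_general s t hs h
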